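/- Let G be a connected simple undirected graph on n ≥ 4 vertices with m edges and degree sequence d₁ ≥ d₂ ≥ … ≥ d_n, let μ₁ ≥ μ₂ ≥ … ≥ μ_n = 0 be the eigenvalues of its Laplacian matrix, and assume μ₁ ≥ 1 + d₁ and μ₂ ≥ d₂ (both of which hold for every connected graph) and (n−2) d₂ ≥ 2m − 1 − d₁. Then the Laplacian Estrada index satisfies LEE(G) ≥ 1 + e^{1+d₁} + e^{d₂} + (n−3) e^{(2m−1−d₁−d₂)/(n−3)}. -/
import Mathlib

set_option maxHeartbeats 1000000


/-- For a connected graph `G` on `n ≥ 4` vertices with `m` edges, nonincreasing degree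
sequence `d` (a rearrangement of the vertex degrees), nonincreasing Laplacian eigenvalues
`μ₁ ≥ … ≥ μ_n = 0` with `μ₁ ≥ 1 + d₁`, `μ₂ ≥ d₂`, and `(n−2) d₂ ≥ 2m − 1 − d₁`, the
Laplacian Estrada index `LEE(G) = ∑_{i=1}^n e^{μ_i}` satisfies
`LEE(G) ≥ 1 + e^{1+d₁} + e^{d₂} + (n−3) e^{(2m−1−d₁−d₂)/(n−3)}`. -/
theorem stmt_13 {n : ℕ} (hn : 4 ≤ n) (G : SimpleGraph (Fin n)) [DecidableRel G.Adj]
    (hconn : G.Connected) (m : ℕ) (hm : m = G.edgeFinset.card)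
    (d : Fin n → ℕ) (hda : Antitone d)
    (hdseq : ∃ σ : Equiv.Perm (Fin n), ∀ i, d i = G.degree (σ i))
    (μ : Fin n → ℝ) (hμa : Antitone μ)
    (hchar : (SimpleGraph.lapMatrix ℝ G).charpoly =
      ∏ i, (Polynomial.X - Polynomial.C (μ i)))
    (hμn : μ ⟨n - 1, by omega⟩ = 0)
    (hμ1 : (1 : ℝ) + d ⟨0, by omega⟩ ≤ μ ⟨0, by omega⟩)
    (hμ2 : (d ⟨1, by omega⟩ : ℝ) ≤ μ ⟨1, by omega⟩)
    (hd2 : 2 * (m : ℝ) - 1 - d ⟨0, by omega⟩ ≤ ((n : ℝ) - 2) * d ⟨1, by omega⟩) :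
    1 + Real.exp ((1 : ℝ) + d ⟨0, by omega⟩) + Real.exp (d ⟨1, by omega⟩ : ℝ) +
        ((n : ℝ) - 3) *
          Real.exp ((2 * (m : ℝ) - 1 - d ⟨0, by omega⟩ - d ⟨1, by omega⟩) / ((n : ℝ) - 3)) ≤
      ∑ i, Real.exp (μ i) := by
  have hn0 : 0 < n := by omega
  set i0 : Fin n := ⟨0, by omega⟩ with hi0
  set i1 : Fin n := ⟨1, by omega⟩ with hi1
  set iN : Fin n := ⟨n - 1, by omega⟩ with hiN
  set a : ℝ := (1 : ℝ) + d i0 with ha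
  set b : ℝ := (d i1 : ℝ) with hbdef
  set c : ℝ := (2 * (m : ℝ) - 1 - d i0 - d i1) / ((n : ℝ) - 3) with hc
  haveI : Nonempty (Fin n) := ⟨i0⟩
  have hn3 : (0 : ℝ) < (n : ℝ) - 3 := by
    have : (4 : ℝ) ≤ (n : ℝ) := by exact_mod_cast hn
    linarith
  -- trace identity
  have htr1 : (G.lapMatrix ℝ).trace = ∑ i, (G.degree i : ℝ) := by
    simp [Matrix.trace, Matrix.diag, SimpleGraph.lapMatrix, SimpleGraph.degMatrix]
  have htr2 : (G.lapMatrix ℝ).trace = ∑ i, μ i := by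
    rw [Matrix.trace_eq_neg_charpoly_coeff, hchar]
    have h3 := Polynomial.prod_X_sub_C_coeff_card_pred Finset.univ μ
      (by simp; omega)
    simp only [Finset.card_univ, Fintype.card_fin] at h3
    simp [Fintype.card_fin, h3]
  have htrace : ∑ i, μ i = 2 * (m : ℝ) := by
    rw [← htr2, htr1]
    rw_mod_cast [SimpleGraph.sum_degrees_eq_twice_card_edges, hm]
  -- splitting the sum
  have hne01 : i0 ≠ i1 := by simp [hi0, hi1, Fin.ext_iff]
  have hne0N : i0 ≠ iN := by simp [hi0, hiN, Fin.ext_iff]; omega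
  have hne1N : i1 ≠ iN := by simp [hi1, hiN, Fin.ext_iff]; omega
  set t : Finset (Fin n) := {i0, i1, iN} with ht
  have htcard : t.card = 3 := by
    rw [ht, Finset.card_insert_of_notMem (by simp [hne01, hne0N]),
      Finset.card_insert_of_notMem (by simp [hne1N]), Finset.card_singleton]
  set s : Finset (Fin n) := Finset.univ \ t with hs
  have hscard : s.card = n - 3 := by
    rw [hs, Finset.card_sdiff_of_subset (Finset.subset_univ t), htcard, Finset.card_univ,
      Fintype.card_fin]
  have hsplit : ∀ f : Fin n → ℝ, ∑ i, f i = ∑ i ∈ s, f i + (f i0 + f i1 + f iN) := by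
    intro f
    rw [hs, ← Finset.sum_sdiff (Finset.subset_univ t)]
    congr 1
    rw [ht, Finset.sum_insert (by simp [hne01, hne0N]),
      Finset.sum_insert (by simp [hne1N]), Finset.sum_singleton]
    ring
  have hcast : ((n - 3 : ℕ) : ℝ) = (n : ℝ) - 3 := by
    push_cast [Nat.cast_sub (by omega : 3 ≤ n)]
    ring
  -- middle sum
  have hsum_s : ∑ i ∈ s, μ i = 2 * (m : ℝ) - μ i0 - μ i1 := by
    have h := hsplit μ
    rw [htrace, hμn] at h
    linarith
  have hmid : Real.exp c * (((n : ℝ) - 3) * (1 - c) + (2 * (m : ℝ) - μ i0 - μ i1))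
      ≤ ∑ i ∈ s, Real.exp (μ i) := by
    have hbnd : ∀ i ∈ s, Real.exp c * (1 + (μ i - c)) ≤ Real.exp (μ i) := by
      intro i _
      have h := Real.add_one_le_exp (μ i - c)
      calc Real.exp c * (1 + (μ i - c)) ≤ Real.exp c * Real.exp (μ i - c) := by
            nlinarith [Real.exp_pos c]
        _ = Real.exp (μ i) := by rw [← Real.exp_add]; ring_nf
    calc Real.exp c * (((n : ℝ) - 3) * (1 - c) + (2 * (m : ℝ) - μ i0 - μ i1))
        = ∑ i ∈ s, Real.exp c * (1 + (μ i - c)) := by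
          rw [← Finset.mul_sum]
          congr 1
          rw [Finset.sum_add_distrib, Finset.sum_sub_distrib, Finset.sum_const,
            Finset.sum_const, hscard, hsum_s, nsmul_eq_mul, nsmul_eq_mul, hcast]
          ring
      _ ≤ ∑ i ∈ s, Real.exp (μ i) := Finset.sum_le_sum hbnd
  -- individual bounds
  have hba : b ≤ a := by
    have : d i1 ≤ d i0 := hda (by simp [hi0, hi1, Fin.le_def])
    have : (d i1 : ℝ) ≤ (d i0 : ℝ) := by exact_mod_cast this
    rw [ha, hbdef]; linarith
  have hcb : c ≤ b := by
    rw [hc, div_le_iff₀ hn3]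
    rw [hbdef] at hd2 ⊢
    nlinarith
  have hca : c ≤ a := le_trans hcb hba
  have hexp0 : Real.exp a + Real.exp c * (μ i0 - a) ≤ Real.exp (μ i0) := by
    have h := Real.add_one_le_exp (μ i0 - a)
    have h2 : Real.exp a * (1 + (μ i0 - a)) ≤ Real.exp (μ i0) := by
      calc Real.exp a * (1 + (μ i0 - a)) ≤ Real.exp a * Real.exp (μ i0 - a) := by
            nlinarith [Real.exp_pos a]
        _ = Real.exp (μ i0) := by rw [← Real.exp_add]; ring_nf
    have h3 : Real.exp c ≤ Real.exp a := Real.exp_le_exp.mpr hca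
    nlinarith [Real.exp_pos a]
  have hexp1 : Real.exp b + Real.exp c * (μ i1 - b) ≤ Real.exp (μ i1) := by
    have h := Real.add_one_le_exp (μ i1 - b)
    have h2 : Real.exp b * (1 + (μ i1 - b)) ≤ Real.exp (μ i1) := by
      calc Real.exp b * (1 + (μ i1 - b)) ≤ Real.exp b * Real.exp (μ i1 - b) := by
            nlinarith [Real.exp_pos b]
        _ = Real.exp (μ i1) := by rw [← Real.exp_add]; ring_nf
    have h3 : Real.exp c ≤ Real.exp b := Real.exp_le_exp.mpr hcb
    nlinarith [Real.exp_pos b]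
  -- assemble
  rw [hsplit (fun i => Real.exp (μ i))]
  have hexpN : Real.exp (μ iN) = 1 := by rw [hμn, Real.exp_zero]
  have hkey : ((n : ℝ) - 3) * c = 2 * (m : ℝ) - 1 - (d i0 : ℝ) - (d i1 : ℝ) := by
    rw [hc]; field_simp
  have heq : Real.exp c * (((n : ℝ) - 3) * (1 - c) + (2 * (m : ℝ) - μ i0 - μ i1))
      = ((n : ℝ) - 3) * Real.exp c + Real.exp c * (a - μ i0) + Real.exp c * (b - μ i1) := by
    rw [ha, hbdef]
    linear_combination (-(Real.exp c)) * hkey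
  rw [heq] at hmid
  show 1 + Real.exp a + Real.exp b + ((n : ℝ) - 3) * Real.exp c ≤ _
  rw [hexpN]
  linarith
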